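/- arXiv:math/0410287 — 2 statements merged into one kernel-verified Lean document; each statement's English description precedes it below -/
import Mathlib

section
/- The Fourier transform of the Bessel kernel g_α equals ĝ_α(ξ) = (1 + 4π²|ξ|²)^(−α/2), where the Fourier transform is defined by f̂(ξ) = ∫_{ℝⁿ} f(t) exp(−2πi ξ·t) dt. -/
open MeasureTheory Real

noncomputable def besselKernel (n : ℕ) (α : ℝ) (x : EuclideanSpace ℝ (Fin n)) : ℝ :=
  (1 / ((4 * Real.pi) ^ (α / 2) * Real.Gamma (α / 2))) *
    ∫ δ in Set.Ioi (0 : ℝ),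
      Real.exp (-Real.pi * ‖x‖ ^ 2 / δ) * Real.exp (-δ / (4 * Real.pi)) *
        δ ^ ((-(n : ℝ) + α) / 2 - 1)

/-
The Bessel kernel is a superposition, over `δ > 0`, of the Gaussians `exp (-π ‖x‖² / δ)` with
weight `exp (-δ / 4π) δ ^ ((α - n) / 2 - 1)`. Each Gaussian has Fourier transform
`δ ^ (n / 2) exp (-π δ ‖ξ‖²)`, and the double integral converges absolutely for `α > 0`, so by
Fubini the Fourier transform of `g_α` is the Gamma integral
`∫ δ ^ (α / 2 - 1) exp (-c δ) dδ = Γ(α / 2) c ^ (-α / 2)` with `c = (1 + 4π² ‖ξ‖²) / 4π`.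
-/

open Set Module

lemma ofReal_exp_neg_pi_mul_sq_norm_div_mul_cexp {V : Type*} [NormedAddCommGroup V]
    [InnerProductSpace ℝ V] (δ : ℝ) (ξ v : V) :
    (rexp (-π * ‖v‖ ^ 2 / δ) : ℂ) * Complex.exp (-2 * π * Complex.I * (inner ℝ ξ v : ℝ)) =
      Complex.exp
        (-((π / δ : ℝ) : ℂ) * (‖v‖ : ℂ) ^ 2 + (-2 * π * Complex.I) * (inner ℝ ξ v : ℝ)) := by
  rw [Complex.ofReal_exp, ← Complex.exp_add]
  push_cast
  ring_nf

section GaussianMixture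

variable {V : Type*} [NormedAddCommGroup V] [InnerProductSpace ℝ V] [FiniteDimensional ℝ V]
  [MeasurableSpace V] [BorelSpace V]

lemma integral_exp_neg_pi_mul_sq_norm_div {δ : ℝ} (hδ : 0 < δ) :
    ∫ v : V, rexp (-π * ‖v‖ ^ 2 / δ) = δ ^ (finrank ℝ V / 2 : ℝ) := by
  have h := GaussianFourier.integral_rexp_neg_mul_sq_norm (V := V) (div_pos pi_pos hδ)
  rw [div_div_cancel₀ pi_ne_zero] at h
  simpa only [neg_div, neg_mul, mul_div_right_comm] using h

lemma integrable_exp_neg_pi_mul_sq_norm_div_mul_cexp {δ : ℝ} (hδ : 0 < δ) (ξ : V) :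
    Integrable fun v : V =>
      (rexp (-π * ‖v‖ ^ 2 / δ) : ℂ) * Complex.exp (-2 * π * Complex.I * (inner ℝ ξ v : ℝ)) := by
  simp_rw [ofReal_exp_neg_pi_mul_sq_norm_div_mul_cexp]
  exact GaussianFourier.integrable_cexp_neg_mul_sq_norm_add (by simpa using div_pos pi_pos hδ) _ ξ

lemma integral_exp_neg_pi_mul_sq_norm_div_mul_cexp {δ : ℝ} (hδ : 0 < δ) (ξ : V) :
    ∫ v : V, (rexp (-π * ‖v‖ ^ 2 / δ) : ℂ) * Complex.exp (-2 * π * Complex.I * (inner ℝ ξ v : ℝ)) =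
      ((δ ^ (finrank ℝ V / 2 : ℝ) * rexp (-π * δ * ‖ξ‖ ^ 2) : ℝ) : ℂ) := by
  simp_rw [ofReal_exp_neg_pi_mul_sq_norm_div_mul_cexp]
  rw [GaussianFourier.integral_cexp_neg_mul_sq_norm_add (by simpa using div_pos pi_pos hδ)]
  rw [Complex.ofReal_mul, Complex.ofReal_exp, Complex.ofReal_cpow hδ.le]
  push_cast
  congr 2
  · field_simp
  · field_simp
    ring_nf
    rw [Complex.I_sq]
    ring

lemma integrable_gaussian_mixture_mul_cexp {w : ℝ → ℝ} (hw : Measurable w)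
    (hwi : IntegrableOn (fun δ => δ ^ (finrank ℝ V / 2 : ℝ) * w δ) (Ioi 0)) (ξ : V) :
    Integrable (Function.uncurry fun (v : V) (δ : ℝ) =>
        (rexp (-π * ‖v‖ ^ 2 / δ) : ℂ) * Complex.exp (-2 * π * Complex.I * (inner ℝ ξ v : ℝ)) *
          w δ)
      ((volume : Measure V).prod (volume.restrict (Ioi 0))) := by
  refine (integrable_prod_iff' (Measurable.aestronglyMeasurable ?_)).2 ⟨?_, ?_⟩
  · fun_prop
  · filter_upwards [ae_restrict_mem measurableSet_Ioi] with δ hδ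
    exact (integrable_exp_neg_pi_mul_sq_norm_div_mul_cexp hδ ξ).mul_const (w δ : ℂ)
  · refine IntegrableOn.congr_fun hwi.norm (fun δ hδ => ?_) measurableSet_Ioi
    have hnorm : ∀ v : V, ‖(rexp (-π * ‖v‖ ^ 2 / δ) : ℂ) *
        Complex.exp (-2 * π * Complex.I * (inner ℝ ξ v : ℝ)) * w δ‖ =
          rexp (-π * ‖v‖ ^ 2 / δ) * ‖w δ‖ := by
      intro v
      rw [norm_mul, norm_mul, Complex.norm_real, Complex.norm_real, norm_of_nonneg (exp_pos _).le,
        Complex.norm_exp]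
      simp
    simp only [Function.uncurry_apply_pair, hnorm, integral_mul_const,
      integral_exp_neg_pi_mul_sq_norm_div hδ, norm_mul, norm_of_nonneg (rpow_nonneg hδ.le _)]

theorem integral_gaussian_mixture_mul_cexp {w : ℝ → ℝ} (hw : Measurable w)
    (hwi : IntegrableOn (fun δ => δ ^ (finrank ℝ V / 2 : ℝ) * w δ) (Ioi 0)) (ξ : V) :
    ∫ v : V, ((∫ δ in Ioi 0, rexp (-π * ‖v‖ ^ 2 / δ) * w δ : ℝ) : ℂ) *
        Complex.exp (-2 * π * Complex.I * (inner ℝ ξ v : ℝ)) =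
      ((∫ δ in Ioi 0, δ ^ (finrank ℝ V / 2 : ℝ) * rexp (-π * δ * ‖ξ‖ ^ 2) * w δ : ℝ) : ℂ) := by
  calc _ = ∫ v : V, ∫ δ in Ioi 0, (rexp (-π * ‖v‖ ^ 2 / δ) : ℂ) *
            Complex.exp (-2 * π * Complex.I * (inner ℝ ξ v : ℝ)) * w δ := by
        congr 1 with v
        rw [← integral_complex_ofReal, ← integral_mul_const]
        congr 1 with δ
        push_cast
        ring
      _ = ∫ δ in Ioi 0, ∫ v : V, (rexp (-π * ‖v‖ ^ 2 / δ) : ℂ) *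
            Complex.exp (-2 * π * Complex.I * (inner ℝ ξ v : ℝ)) * w δ :=
        integral_integral_swap (integrable_gaussian_mixture_mul_cexp hw hwi ξ)
      _ = ∫ δ in Ioi 0, ((δ ^ (finrank ℝ V / 2 : ℝ) * rexp (-π * δ * ‖ξ‖ ^ 2) * w δ : ℝ) : ℂ) := by
        refine setIntegral_congr_fun measurableSet_Ioi fun δ hδ => ?_
        rw [integral_mul_const, integral_exp_neg_pi_mul_sq_norm_div_mul_cexp hδ]
        push_cast
        rfl
      _ = _ := integral_complex_ofReal

end GaussianMixture

noncomputable def besselWeight (d α δ : ℝ) : ℝ :=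
  rexp (-δ / (4 * π)) * δ ^ ((-d + α) / 2 - 1)

lemma besselKernel_eq_integral_besselWeight (n : ℕ) (α : ℝ) (x : EuclideanSpace ℝ (Fin n)) :
    besselKernel n α x = 1 / ((4 * π) ^ (α / 2) * Gamma (α / 2)) *
      ∫ δ in Ioi 0, rexp (-π * ‖x‖ ^ 2 / δ) * besselWeight n α δ := by
  simp only [besselKernel, besselWeight, mul_assoc]

lemma measurable_besselWeight (d α : ℝ) : Measurable (besselWeight d α) := by
  unfold besselWeight
  fun_prop

lemma rpow_mul_exp_mul_besselWeight (d α r : ℝ) {δ : ℝ} (hδ : 0 < δ) :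
    δ ^ (d / 2) * rexp (-π * δ * r) * besselWeight d α δ =
      δ ^ (α / 2 - 1) * rexp (-((1 + 4 * π ^ 2 * r) / (4 * π) * δ)) := by
  have hpow : δ ^ (d / 2) * δ ^ ((-d + α) / 2 - 1) = δ ^ (α / 2 - 1) := by
    rw [← rpow_add hδ]
    ring_nf
  have hexp : rexp (-π * δ * r) * rexp (-δ / (4 * π)) =
      rexp (-((1 + 4 * π ^ 2 * r) / (4 * π) * δ)) := by
    rw [← exp_add]
    congr 1
    field_simp
    ring
  rw [besselWeight, ← hpow, ← hexp]
  ring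

lemma integrableOn_rpow_mul_besselWeight (d : ℝ) {α : ℝ} (hα : 0 < α) :
    IntegrableOn (fun δ => δ ^ (d / 2) * besselWeight d α δ) (Ioi 0) := by
  have h := integrableOn_rpow_mul_exp_neg_mul_rpow (p := 1) (s := α / 2 - 1) (b := 1 / (4 * π))
    (by linarith) one_pos (by positivity)
  refine h.congr_fun (fun δ hδ => ?_) measurableSet_Ioi
  have := rpow_mul_exp_mul_besselWeight d α 0 hδ
  simp only [mul_zero, exp_zero, mul_one, add_zero] at this
  rw [this]
  simp only [rpow_one, neg_mul]

lemma integral_rpow_mul_exp_mul_besselWeight (d : ℝ) {α r : ℝ} (hα : 0 < α) (hr : 0 ≤ r) :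
    ∫ δ in Ioi 0, δ ^ (d / 2) * rexp (-π * δ * r) * besselWeight d α δ =
      (4 * π) ^ (α / 2) * Gamma (α / 2) * (1 + 4 * π ^ 2 * r) ^ (-(α / 2)) := by
  have hc : 0 < (1 + 4 * π ^ 2 * r) / (4 * π) := by positivity
  rw [setIntegral_congr_fun measurableSet_Ioi fun δ hδ => rpow_mul_exp_mul_besselWeight d α r hδ,
    integral_rpow_mul_exp_neg_mul_Ioi (by positivity) hc, one_div_div,
    div_rpow (by positivity) (by positivity), rpow_neg (by positivity)]
  ring

theorem bessel_kernel_fourier_transform_general (n : ℕ) (α : ℝ) (hα : 0 < α)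
    (ξ : EuclideanSpace ℝ (Fin n)) :
    ∫ t, (besselKernel n α t : ℂ) * Complex.exp (-2 * Real.pi * Complex.I * (inner ℝ ξ t : ℝ)) =
      ((1 + 4 * Real.pi ^ 2 * ‖ξ‖ ^ 2 : ℝ) ^ (-(α / 2)) : ℝ) := by
  have hdim : (finrank ℝ (EuclideanSpace ℝ (Fin n)) : ℝ) = n := by simp
  have hmix := integral_gaussian_mixture_mul_cexp (measurable_besselWeight n α)
    (by rw [hdim]; exact integrableOn_rpow_mul_besselWeight n hα) ξ
  rw [hdim, integral_rpow_mul_exp_mul_besselWeight n hα (sq_nonneg ‖ξ‖)] at hmix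
  simp only [besselKernel_eq_integral_besselWeight, Complex.ofReal_mul,
    mul_assoc _ _ (Complex.exp _)]
  rw [integral_const_mul, hmix, ← Complex.ofReal_mul]
  field_simp

theorem bessel_kernel_fourier_transform (n : ℕ) (hn : 1 ≤ n) (α : ℝ) (hα : 0 < α)
    (ξ : EuclideanSpace ℝ (Fin n)) :
    ∫ t, (besselKernel n α t : ℂ) * Complex.exp (-2 * Real.pi * Complex.I * (inner ℝ ξ t : ℝ)) =
      ((1 + 4 * Real.pi ^ 2 * ‖ξ‖ ^ 2 : ℝ) ^ (-(α / 2)) : ℝ) :=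
  bessel_kernel_fourier_transform_general n α hα ξ
end

section
/- Reflection identity: if u is a positive solution of the integral equation u = g_α ∗ u^β on ℝⁿ, then for every real λ and every x, u(x) − u(x^λ) = ∫_{Σ_λ} (g_α(x−y) − g_α(x^λ−y)) (u(y)^β − u_λ(y)^β) dy, where x^λ = (2λ−x₁, x₂, …, xₙ), u_λ(x) = u(x^λ), and Σ_λ = {x : x₁ ≥ λ}. -/
open MeasureTheory Real

noncomputable def reflect (n : ℕ) [NeZero n] (l : ℝ) (x : EuclideanSpace ℝ (Fin n)) :
    EuclideanSpace ℝ (Fin n) :=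
  WithLp.toLp 2 (Function.update x 0 (2 * l - x 0))

/-!
Split `∫ g_α(x - y) u(y)^β dy` at the hyperplane `y₁ = λ` and move the half `y₁ < λ` to `Σ_λ`
with the reflection, which preserves Lebesgue measure and distances; the hyperplane itself is
null. Doing the same at `x^λ` and subtracting gives the identity, because
`g_α(x - y^λ) = g_α(x^λ - y)` and `g_α(x^λ - y^λ) = g_α(x - y)`.
-/

section Involution

variable {α : Type*} [MeasurableSpace α] {μ : Measure α} {R : α → α} {S : Set α}

theorem integral_eq_setIntegral_add_setIntegral_comp {E : Type*} [NormedAddCommGroup E]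
    [NormedSpace ℝ E] (hR : Function.Involutive R) (hRμ : MeasurePreserving R μ μ)
    (hS : MeasurableSet S) (hRS : R ⁻¹' Sᶜ =ᵐ[μ] S) {g : α → E} (hg : Integrable g μ) :
    ∫ y, g y ∂μ = ∫ y in S, g y ∂μ + ∫ y in S, g (R y) ∂μ := by
  have hRe := (MeasurableEquiv.ofInvolutive R hR hRμ.measurable).measurableEmbedding
  rw [← integral_add_compl hS hg, ← hRμ.setIntegral_preimage_emb hRe g Sᶜ,
    setIntegral_congr_set hRS]

theorem integral_mul_sub_integral_mul_eq_setIntegral (hR : Function.Involutive R)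
    (hRμ : MeasurePreserving R μ μ) (hS : MeasurableSet S) (hRS : R ⁻¹' Sᶜ =ᵐ[μ] S)
    {K : α → α → ℝ} (hK : ∀ x y, K (R x) (R y) = K x y) {f : α → ℝ} {x : α}
    (hx : Integrable (fun y => K x y * f y) μ) (hRx : Integrable (fun y => K (R x) y * f y) μ) :
    ∫ y, K x y * f y ∂μ - ∫ y, K (R x) y * f y ∂μ =
      ∫ y in S, (K x y - K (R x) y) * (f y - f (R y)) ∂μ := by
  set g := fun y => K x y * f y - K (R x) y * f y
  have hg : Integrable g μ := hx.sub hRx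
  have hgR : Integrable (fun y => g (R y)) μ :=
    (hRμ.integrable_comp_emb
      (MeasurableEquiv.ofInvolutive R hR hRμ.measurable).measurableEmbedding).2 hg
  have hpoint : ∀ y, (K x y - K (R x) y) * (f y - f (R y)) = g y + g (R y) := by
    -- `K x (R y) = K (R x) y`: the term `g (R y)` carries the kernels swapped.
    intro y
    have h₁ := hK x y
    have h₂ := hK (R x) y
    rw [hR x] at h₂
    simp only [g]
    rw [← h₁, h₂]
    ring
  rw [← integral_sub hx hRx, integral_eq_setIntegral_add_setIntegral_comp hR hRμ hS hRS hg,
    ← integral_add hg.integrableOn hgR.integrableOn]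
  simp_rw [hpoint]

end Involution

theorem IsometryEquiv.measurePreserving_volume {V : Type*} [NormedAddCommGroup V]
    [InnerProductSpace ℝ V] [FiniteDimensional ℝ V] [MeasurableSpace V] [BorelSpace V]
    (e : V ≃ᵢ V) : MeasurePreserving e volume volume := by
  have he := e.measurePreserving_euclideanHausdorffMeasure (Module.finrank ℝ V)
  rwa [InnerProductSpace.euclideanHausdorffMeasure_eq_volume] at he

theorem EuclideanSpace.volume_setOf_apply_eq {ι : Type*} [Fintype ι] (i : ι) (c : ℝ) :
    volume {y : EuclideanSpace ℝ ι | y i = c} = 0 := by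
  have hmeas : MeasurableSet {z : ι → ℝ | z i = c} :=
    measurableSet_eq_fun (measurable_pi_apply i) measurable_const
  change volume (WithLp.ofLp ⁻¹' {z : ι → ℝ | z i = c}) = 0
  rw [(PiLp.volume_preserving_ofLp ι).measure_preimage hmeas.nullMeasurableSet, volume_pi]
  exact Measure.pi_hyperplane (fun _ : ι => (volume : Measure ℝ)) i c

theorem besselKernel_eq_of_norm_eq {n : ℕ} {α : ℝ} {a b : EuclideanSpace ℝ (Fin n)}
    (h : ‖a‖ = ‖b‖) : besselKernel n α a = besselKernel n α b := by
  unfold besselKernel; rw [h]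

section Reflection

variable (n : ℕ) [NeZero n] (l : ℝ)

@[simp]
theorem reflect_apply_zero (x : EuclideanSpace ℝ (Fin n)) : reflect n l x 0 = 2 * l - x 0 := by
  unfold reflect; exact Function.update_self 0 (2 * l - x 0) x

@[simp]
theorem reflect_apply_of_ne (x : EuclideanSpace ℝ (Fin n)) {i : Fin n} (h : i ≠ 0) :
    reflect n l x i = x i := by
  unfold reflect; exact Function.update_of_ne h (2 * l - x 0) x

theorem reflect_involutive : Function.Involutive (reflect n l) := by
  intro x
  ext i
  rcases eq_or_ne i 0 with rfl | hi
  · simp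
  · simp [hi]

theorem isometry_reflect : Isometry (reflect n l) := by
  refine Isometry.of_dist_eq fun x y => ?_
  rw [EuclideanSpace.dist_eq, EuclideanSpace.dist_eq]
  congr 1
  refine Finset.sum_congr rfl fun i _ => ?_
  by_cases hi : i = 0
  · subst hi
    rw [reflect_apply_zero, reflect_apply_zero, Real.dist_eq, Real.dist_eq,
      ← abs_neg]
    ring_nf
  · rw [reflect_apply_of_ne n l x hi, reflect_apply_of_ne n l y hi]

theorem reflect_measurePreserving :
    MeasurePreserving (reflect n l) (volume : Measure (EuclideanSpace ℝ (Fin n))) volume :=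
  IsometryEquiv.measurePreserving_volume
    { toEquiv := (reflect_involutive n l).toPerm, isometry_toFun := isometry_reflect n l }

theorem reflect_preimage_compl_ae_eq :
    reflect n l ⁻¹' {y | l ≤ y 0}ᶜ =ᵐ[volume] {y : EuclideanSpace ℝ (Fin n) | l ≤ y 0} := by
  have hpre : reflect n l ⁻¹' {y | l ≤ y 0}ᶜ = {y : EuclideanSpace ℝ (Fin n) | l < y 0} := by
    ext y
    simp only [Set.mem_preimage, Set.mem_compl_iff, Set.mem_ofPred_eq, not_le, reflect_apply_zero]
    constructor <;> intro h <;> linarith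
  rw [hpre, ae_eq_set]
  constructor
  · exact measure_mono_null (fun y hy => hy.2 (show l < y 0 from hy.1).le) measure_empty
  · refine measure_mono_null (fun y hy => ?_) (EuclideanSpace.volume_setOf_apply_eq 0 l)
    exact le_antisymm (not_lt.1 hy.2) hy.1

end Reflection

theorem reflection_identity_general (n : ℕ) [NeZero n] (α β : ℝ)
    (u : EuclideanSpace ℝ (Fin n) → ℝ) (hupos : ∀ x, 0 < u x)
    (heq : ∀ x, u x = ∫ y, besselKernel n α (x - y) * u y ^ β)
    (l : ℝ) (x : EuclideanSpace ℝ (Fin n)) :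
    u x - u (reflect n l x) =
      ∫ y in {y : EuclideanSpace ℝ (Fin n) | l ≤ y 0},
        (besselKernel n α (x - y) - besselKernel n α (reflect n l x - y)) *
          (u y ^ β - u (reflect n l y) ^ β) := by
  -- `∫` of a non-integrable function is `0`, which `u > 0` rules out.
  have hint : ∀ z, Integrable (fun y => besselKernel n α (z - y) * u y ^ β) := fun z =>
    .of_integral_ne_zero (heq z ▸ (hupos z).ne')
  have hK : ∀ z y, besselKernel n α (reflect n l z - reflect n l y) = besselKernel n α (z - y) :=
    fun z y => besselKernel_eq_of_norm_eq (by
      rw [← dist_eq_norm, ← dist_eq_norm, (isometry_reflect n l).dist_eq])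
  rw [heq x, heq (reflect n l x)]
  exact integral_mul_sub_integral_mul_eq_setIntegral (reflect_involutive n l)
    (reflect_measurePreserving n l) (measurableSet_le measurable_const (by fun_prop))
    (reflect_preimage_compl_ae_eq n l) (K := fun z y => besselKernel n α (z - y)) hK
    (hint x) (hint _)

theorem reflection_identity (n : ℕ) [NeZero n] (hn : 1 ≤ n) (α β : ℝ) (hα : 0 < α) (hβ : 1 < β)
    (u : EuclideanSpace ℝ (Fin n) → ℝ) (hupos : ∀ x, 0 < u x)
    (humeas : Measurable u)
    (huloc : LocallyIntegrable (fun y => u y ^ β) volume)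
    (heq : ∀ x, u x = ∫ y, besselKernel n α (x - y) * u y ^ β)
    (l : ℝ) (x : EuclideanSpace ℝ (Fin n)) :
    u x - u (reflect n l x) =
      ∫ y in {y : EuclideanSpace ℝ (Fin n) | l ≤ y 0},
        (besselKernel n α (x - y) - besselKernel n α (reflect n l x - y)) *
          (u y ^ β - u (reflect n l y) ^ β) :=
  reflection_identity_general n α β u hupos heq l x
end
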